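/- Let k ≥ 2 be even and let a : ℕ → ℝ be a k-periodic real sequence whose monodromy matrix C_k has trace T with |T| < 2. Suppose T = 2 cos(2πm/P) for some integers m and P ≥ 1. Then C_k^P is the identity matrix, and consequently every solution x : ℕ → ℂ of x_{n+2} = a_n x_{n+1} + x_n is kP-periodic: x_{n+kP} = x_n for all n ≥ 0. -/

import Mathlib

/-!
With `C = C_k` and `θ = 2πm/P`, evenness of `k` gives `det C = 1`, so Cayley–Hamilton reads
`C² = 2 cos θ • C - 1`. By induction `sin θ • Cⁿ = sin (nθ) • C - sin ((n-1)θ) • 1`, and since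
`|T| < 2` forces `sin θ ≠ 0`, `cos (Pθ) = 1` yields `C^P = 1`.

The Fibonacci matrices carry `(x₁, x₀)` to `(x_{n+1}, x_n)`, so `C^P = C_{kP} = 1` means that
`n ↦ x_{n+kP}`, which is again a solution by periodicity of `a`, has the initial values of `x`.
-/

/-- The `i`-th Fibonacci matrix of a real sequence, viewed as a complex matrix. -/
def fibMat (a : ℕ → ℝ) (i : ℕ) : Matrix (Fin 2) (Fin 2) ℂ :=
  !![(a i : ℂ), 1; 1, 0]

/-- The product `C n = A_{n-1} ⋯ A_1 A_0` of Fibonacci matrices. -/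
noncomputable def fibProd (a : ℕ → ℝ) : ℕ → Matrix (Fin 2) (Fin 2) ℂ
  | 0 => 1
  | n + 1 => fibMat a n * fibProd a n

open Real Function Matrix

theorem Matrix.mul_self_fin_two {R : Type*} [CommRing R] [Nontrivial R]
    (M : Matrix (Fin 2) (Fin 2) R) : M * M = M.trace • M - M.det • 1 := by
  have h := M.aeval_self_charpoly
  simp only [Matrix.charpoly_fin_two, map_add, map_sub, map_mul, Polynomial.aeval_X,
    Polynomial.aeval_C, Algebra.algebraMap_eq_smul_one, smul_one_mul, sq] at h
  rw [← sub_eq_zero, ← h]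
  abel

section Rotation

variable {A : Type*} [Ring A] [Algebra ℝ A] {M : A} {θ : ℝ}

theorem sin_smul_pow_of_mul_self_eq (hM : M * M = (2 * cos θ) • M - 1) (n : ℕ) :
    sin θ • M ^ n = sin (n * θ) • M - sin ((n - 1) * θ) • (1 : A) := by
  induction n with
  | zero => simp
  | succ n ih =>
    have hsin : sin ((n + 1) * θ) = 2 * cos θ * sin (n * θ) - sin ((n - 1) * θ) := by
      rw [show (n + 1) * θ = n * θ + θ by ring, show (n - 1) * θ = n * θ - θ by ring,
        sin_add, sin_sub]
      ring
    calc sin θ • M ^ (n + 1) = (sin θ • M ^ n) * M := by rw [pow_succ, smul_mul_assoc]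
      _ = sin (n * θ) • (M * M) - sin ((n - 1) * θ) • M := by
        rw [ih, sub_mul, smul_mul_assoc, smul_mul_assoc, one_mul]
      _ = sin (((n + 1 : ℕ) : ℝ) * θ) • M - sin ((((n + 1 : ℕ) : ℝ) - 1) * θ) • (1 : A) := by
        rw [hM]
        push_cast
        rw [hsin, add_sub_cancel_right]
        module

theorem pow_eq_one_of_mul_self_eq (hM : M * M = (2 * cos θ) • M - 1) (hθ : sin θ ≠ 0)
    {P : ℕ} (hP : cos (P * θ) = 1) : M ^ P = 1 := by
  have hsinP : sin (P * θ) = 0 := sin_eq_zero_iff_cos_eq.mpr (Or.inl hP)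
  have hsinP' : sin ((P - 1) * θ) = - sin θ := by
    rw [sub_mul, one_mul, sin_sub, hsinP, hP]
    ring
  apply smul_right_injective A hθ
  simp only [sin_smul_pow_of_mul_self_eq hM P, hsinP, hsinP', zero_smul, zero_sub, neg_smul,
    neg_neg]

end Rotation

def IsFibSolution (a : ℕ → ℝ) (x : ℕ → ℂ) : Prop :=
  ∀ n, x (n + 2) = (a n : ℂ) * x (n + 1) + x n

theorem det_fibProd (a : ℕ → ℝ) (n : ℕ) : (fibProd a n).det = (-1) ^ n := by
  induction n with
  | zero => simp [fibProd]
  | succ n ih =>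
    rw [fibProd, Matrix.det_mul, ih]
    simp [fibMat, Matrix.det_fin_two_of, pow_succ']

theorem fibProd_add (a : ℕ → ℝ) (n m : ℕ) :
    fibProd a (n + m) = fibProd (fun i => a (i + m)) n * fibProd a m := by
  induction n with
  | zero => simp [fibProd]
  | succ n ih =>
    rw [Nat.add_right_comm, fibProd, ih, fibProd, mul_assoc]
    rfl

theorem Function.Periodic.fibProd_mul {a : ℕ → ℝ} {k : ℕ} (ha : Periodic a k) (j : ℕ) :
    fibProd a (k * j) = fibProd a k ^ j := by
  induction j with
  | zero => simp [fibProd]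
  | succ j ih =>
    have hshift : (fun i => a (i + k * j)) = a := funext <| by
      simpa [mul_comm] using ha.nat_mul j
    rw [mul_add_one, add_comm, fibProd_add, hshift, ih, pow_succ']

namespace IsFibSolution

variable {a : ℕ → ℝ} {x : ℕ → ℂ}

theorem fibProd_mulVec (hx : IsFibSolution a x) (n : ℕ) :
    fibProd a n *ᵥ ![x 1, x 0] = ![x (n + 1), x n] := by
  induction n with
  | zero => simp [fibProd]
  | succ n ih =>
    rw [fibProd, ← Matrix.mulVec_mulVec, ih]
    ext i
    fin_cases i <;> simp [fibMat, hx n, mul_comm]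

theorem ext {y : ℕ → ℂ} (hx : IsFibSolution a x) (hy : IsFibSolution a y)
    (h0 : x 0 = y 0) (h1 : x 1 = y 1) : x = y := by
  funext n
  induction n using Nat.twoStepInduction with
  | zero => exact h0
  | one => exact h1
  | more n ih0 ih1 => rw [hx, hy, ih0, ih1]

theorem comp_add_right {N : ℕ} (hx : IsFibSolution a x) (ha : Periodic a N) :
    IsFibSolution a (fun n => x (n + N)) := by
  intro n
  simpa only [Nat.add_right_comm _ N, ha n] using hx (n + N)

theorem periodic {N : ℕ} (hx : IsFibSolution a x) (ha : Periodic a N) (hN : fibProd a N = 1) :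
    Periodic x N := by
  have hinit := hx.fibProd_mulVec N
  rw [hN, Matrix.one_mulVec] at hinit
  have h := (hx.comp_add_right ha).ext hx (by simpa using (congrFun hinit 1).symm)
    (by simpa [add_comm] using (congrFun hinit 0).symm)
  exact congrFun h

end IsFibSolution

theorem even_period_rational_rotation_periodic_general (k : ℕ)
    (hkeven : Even k) (a : ℕ → ℝ) (ha : ∀ n, a (n + k) = a n)
    (T : ℝ) (hT : (fibProd a k).trace = (T : ℂ)) (hTsmall : |T| < 2)
    (m : ℤ) (P : ℕ)
    (hcos : T = 2 * Real.cos (2 * Real.pi * m / P)) :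
    fibProd a k ^ P = 1 ∧
    ∀ x : ℕ → ℂ, (∀ n, x (n + 2) = (a n : ℂ) * x (n + 1) + x n) →
      ∀ n, x (n + k * P) = x n := by
  set θ := 2 * π * m / P
  have hC : fibProd a k * fibProd a k = (2 * cos θ) • fibProd a k - 1 := by
    rw [Matrix.mul_self_fin_two, hT, det_fibProd, hkeven.neg_one_pow, one_smul, hcos,
      Complex.coe_smul]
  have hsin : sin θ ≠ 0 := by
    rw [Ne, sin_eq_zero_iff_cos_eq]
    rintro (h | h) <;> norm_num [hcos, h] at hTsmall
  have hcosP : cos (P * θ) = 1 := by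
    rcases eq_or_ne P 0 with rfl | hP
    · simp
    · rw [show P * θ = m * (2 * π) by simp only [θ]; field_simp]
      exact cos_int_mul_two_pi m
  have hCP : fibProd a k ^ P = 1 := pow_eq_one_of_mul_self_eq hC hsin hcosP
  have haP : Periodic a (k * P) := by simpa [mul_comm] using Periodic.nat_mul ha P
  exact ⟨hCP, fun x hx => IsFibSolution.periodic hx haP (by rw [Periodic.fibProd_mul ha, hCP])⟩

theorem even_period_rational_rotation_periodic (k : ℕ) (hk : 2 ≤ k)
    (hkeven : Even k) (a : ℕ → ℝ) (ha : ∀ n, a (n + k) = a n)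
    (T : ℝ) (hT : (fibProd a k).trace = (T : ℂ)) (hTsmall : |T| < 2)
    (m : ℤ) (P : ℕ) (hP : 1 ≤ P)
    (hcos : T = 2 * Real.cos (2 * Real.pi * m / P)) :
    fibProd a k ^ P = 1 ∧
    ∀ x : ℕ → ℂ, (∀ n, x (n + 2) = (a n : ℂ) * x (n + 1) + x n) →
      ∀ n, x (n + k * P) = x n :=
  even_period_rational_rotation_periodic_general k hkeven a ha T hT hTsmall m P hcos
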